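/- Let G be a finite simple graph with a pair-coloring χ and let t ∈ ℕ. If v and w are maximal vertices of the t-closure graph of (G,χ), then either cl_t^{(G,χ)}(v) = cl_t^{(G,χ)}(w) or cl_t^{(G,χ)}(v) ∩ cl_t^{(G,χ)}(w) = ∅. -/

import Mathlib

open SimpleGraph

/-- The interior (set of internal vertices) of a walk: its support minus the two endpoints. -/
def walkInterior {V : Type*} {G : SimpleGraph V} {x y : V} (p : G.Walk x y) : Set V :=
  {z | z ∈ p.support ∧ z ≠ x ∧ z ≠ y}

/-- `H` is (isomorphic to) a topological subgraph of `G`: there is an injective map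
`φ : V(H) → V(G)` together with, for every edge `xy` of `H`, a path in `G` from `φ x`
to `φ y` of length at least 1, such that these paths are pairwise internally
vertex-disjoint and no internal vertex of any of them lies in the image of `φ`. -/
def IsTopSubgraph {W : Type*} {V : Type*} (H : SimpleGraph W) (G : SimpleGraph V) : Prop :=
  ∃ φ : W → V, Function.Injective φ ∧
    ∃ P : ∀ x y : W, H.Adj x y → G.Walk (φ x) (φ y),
      (∀ x y (hxy : H.Adj x y), (P x y hxy).IsPath ∧ 0 < (P x y hxy).length) ∧
      (∀ x y (hxy : H.Adj x y), P y x hxy.symm = (P x y hxy).reverse) ∧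
      (∀ x y (hxy : H.Adj x y), Disjoint (walkInterior (P x y hxy)) (Set.range φ)) ∧
      (∀ x y (hxy : H.Adj x y), ∀ x' y' (hxy' : H.Adj x' y'), s(x, y) ≠ s(x', y') →
        Disjoint (walkInterior (P x y hxy)) (walkInterior (P x' y' hxy')))

/-- `G` contains the complete graph on `h` vertices as a topological subgraph. -/
def HasTopK {V : Type*} (G : SimpleGraph V) (h : ℕ) : Prop :=
  IsTopSubgraph (⊤ : SimpleGraph (Fin h)) G

/-- `a` is a constant witnessing the Bollobás–Thomason / Komlós–Szemerédi degree bound: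
for every `h ≥ 1`, every finite simple graph excluding `K_h` as a topological subgraph
has degree sum at most `a·h²·n`. -/
def DegSumConst (a : ℝ) : Prop :=
  ∀ (n h : ℕ) (G : SimpleGraph (Fin n)), 1 ≤ h → ¬ HasTopK G h →
    ∑ v : Fin n, (({u | G.Adj v u}.ncard : ℝ)) ≤ a * (h : ℝ) ^ 2 * (n : ℝ)

/-- One refinement round of Color Refinement on the complete graph on `V`, where the
current vertex partition is `r` and the arc color of `(v,w)` is the pair
`(G.Adj v w, χ v w)` (multiset equality is expressed by equality of all counts). -/
def crStep {V C : Type*} (G : SimpleGraph V) (χ : V → V → C) (r : V → V → Prop) :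
    V → V → Prop := fun x y =>
  r x y ∧ ∀ (z : V) (c₁ c₂ : C),
    ({u | u ≠ x ∧ r u z ∧ χ x u = c₁ ∧ χ u x = c₂ ∧ G.Adj x u}.ncard =
      {u | u ≠ y ∧ r u z ∧ χ y u = c₁ ∧ χ u y = c₂ ∧ G.Adj y u}.ncard) ∧
    ({u | u ≠ x ∧ r u z ∧ χ x u = c₁ ∧ χ u x = c₂ ∧ ¬ G.Adj x u}.ncard =
      {u | u ≠ y ∧ r u z ∧ χ y u = c₁ ∧ χ u y = c₂ ∧ ¬ G.Adj y u}.ncard)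

/-- The Color Refinement stabilization of the partition `r` (iterating the refinement
round enough times to reach the stable partition). -/
def crStable {V C : Type*} [Fintype V] (G : SimpleGraph V) (χ : V → V → C)
    (r : V → V → Prop) : V → V → Prop :=
  (crStep G χ)^[Fintype.card V + 1] r

/-- Split all color classes of size at most `t` into singletons. -/
def splitSmall {V : Type*} (t : ℕ) (r : V → V → Prop) : V → V → Prop := fun x y =>
  r x y ∧ ({u | r u x}.ncard ≤ t → x = y)

/-- The `t`-CR-stable partition obtained from the initial partition `r`: alternately
apply Color Refinement and split the classes of size at most `t`, until stable. -/
def tCRStable {V C : Type*} [Fintype V] (G : SimpleGraph V) (χ : V → V → C) (t : ℕ)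
    (r : V → V → Prop) : V → V → Prop :=
  (fun s => splitSmall t (crStable G χ s))^[Fintype.card V + 1] r

/-- The partition obtained from the vertex coloring `v ↦ χ v v` by individualizing
every vertex of `X`. -/
def indivRel {V C : Type*} (χ : V → V → C) (X : Set V) : V → V → Prop := fun x y =>
  χ x x = χ y y ∧ (x ∈ X ↔ y ∈ X) ∧ (x ∈ X → x = y)

/-- The `t`-closure `cl_t^{(G,χ)}(X)`: the set of vertices whose color class in the
`t`-CR-stable coloring (after individualizing `X`) is a singleton. -/
def clSet {V C : Type*} [Fintype V] (G : SimpleGraph V) (χ : V → V → C) (t : ℕ)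
    (X : Set V) : Set V :=
  {v | {u | tCRStable G χ t (indivRel χ X) u v}.ncard = 1}

/-- The arc relation of the `t`-closure graph of `(G,χ)`. -/
def clArc {V C : Type*} [Fintype V] (G : SimpleGraph V) (χ : V → V → C) (t : ℕ) :
    V → V → Prop := fun v w => v ≠ w ∧ w ∈ clSet G χ t {v}

/-- A vertex is maximal if it lies in a strongly connected component of the
`t`-closure graph without outgoing arcs. -/
def MaximalVtx {V C : Type*} [Fintype V] (G : SimpleGraph V) (χ : V → V → C) (t : ℕ)
    (v : V) : Prop :=
  ∀ u, clArc G χ t v u → clArc G χ t u v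

/-- A vertex coloring is `1`-stable. -/
def IsOneStable {V C : Type*} (G : SimpleGraph V) (lam : V → C) : Prop :=
  ∀ v w, lam v = lam w → ∀ c,
    {u | G.Adj v u ∧ lam u = c}.ncard = {u | G.Adj w u ∧ lam u = c}.ncard

/-- A pair coloring is `2`-stable on the simple graph `G`. -/
def IsTwoStable {V C : Type*} (G : SimpleGraph V) (χ : V → V → C) : Prop :=
  ∀ v w v' w', χ v w = χ v' w' →
    ((v = w ↔ v' = w') ∧ (G.Adj v w ↔ G.Adj v' w') ∧ χ v v = χ v' v' ∧ χ w w = χ w' w') ∧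
    ∀ c₁ c₂, {u | χ v u = c₁ ∧ χ u w = c₂}.ncard = {u | χ v' u = c₁ ∧ χ u w' = c₂}.ncard

/-- A pair coloring is `2`-stable on the directed graph with arc relation `E`. -/
def IsTwoStableDigraph {V C : Type*} (E : V → V → Prop) (χ : V → V → C) : Prop :=
  ∀ v w v' w', χ v w = χ v' w' →
    ((v = w ↔ v' = w') ∧ (E v w ↔ E v' w') ∧ (E w v ↔ E w' v') ∧
      χ v v = χ v' v' ∧ χ w w = χ w' w') ∧
    ∀ c₁ c₂, {u | χ v u = c₁ ∧ χ u w = c₂}.ncard = {u | χ v' u = c₁ ∧ χ u w' = c₂}.ncard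

/-- A coloring of triples is `3`-stable on the simple graph `G`. -/
def IsThreeStable {V C : Type*} (G : SimpleGraph V) (χ₃ : V → V → V → C) : Prop :=
  ∀ v₁ v₂ v₃ w₁ w₂ w₃, χ₃ v₁ v₂ v₃ = χ₃ w₁ w₂ w₃ →
    ((v₁ = v₂ ↔ w₁ = w₂) ∧ (v₁ = v₃ ↔ w₁ = w₃) ∧ (v₂ = v₃ ↔ w₂ = w₃) ∧
      (G.Adj v₁ v₂ ↔ G.Adj w₁ w₂) ∧ (G.Adj v₁ v₃ ↔ G.Adj w₁ w₃) ∧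
      (G.Adj v₂ v₃ ↔ G.Adj w₂ w₃)) ∧
    ∀ c₁ c₂ c₃,
      {u | χ₃ u v₂ v₃ = c₁ ∧ χ₃ v₁ u v₃ = c₂ ∧ χ₃ v₁ v₂ u = c₃}.ncard =
        {u | χ₃ u w₂ w₃ = c₁ ∧ χ₃ w₁ u w₃ = c₂ ∧ χ₃ w₁ w₂ u = c₃}.ncard

/-- Reachability in `G` by a walk avoiding the set `S`. -/
def ReachOutside {V : Type*} (G : SimpleGraph V) (S : Set V) (x y : V) : Prop :=
  ∃ p : G.Walk x y, ∀ z ∈ p.support, z ∉ S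

/-- `Z` is the vertex set of a connected component of the induced subgraph `G − S`. -/
def IsCompOutside {V : Type*} (G : SimpleGraph V) (S Z : Set V) : Prop :=
  ∃ x₀, x₀ ∉ S ∧ Z = {y | ReachOutside G S x₀ y}

/-- The neighborhood `N_G(S)` of a set `S`: all vertices outside `S` with a neighbor in `S`. -/
def nbhdOf {V : Type*} (G : SimpleGraph V) (S : Set V) : Set V :=
  {v | v ∉ S ∧ ∃ u ∈ S, G.Adj v u}

/-- A partition of the vertex set (given as an equivalence relation `r`) is
`λ`-definable: for some set `Cs` of colors attained on off-diagonal pairs, the classes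
of `r` are exactly the connected components of the graph with edges
`{v,w}` (`v ≠ w`) such that `λ(v,w) ∈ Cs`. -/
def LamDefinable {V C : Type*} (lam : V → V → C) (r : V → V → Prop) : Prop :=
  ∃ Cs : Set C, (∀ c ∈ Cs, ∃ v w : V, v ≠ w ∧ lam v w = c) ∧
    ∀ x y, r x y ↔ (SimpleGraph.fromRel (fun v w => lam v w ∈ Cs)).Reachable x y

/-!
The `t`-CR-stable partition is produced by iterating operators on relations that refine,
preserve equivalence relations and are monotone; Color Refinement is monotone because a count
that agrees on every class of a partition agrees on every union of classes. A strictly refining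
chain of partitions of `V` has at most `|V| - 1` steps, so `|V| + 1` iterations reach a fixed
point and `tCRStable G χ t` is idempotent. If `u ∈ cl(v)`, the partition obtained by
individualizing `v` already singles out `u`, so by monotonicity and idempotence it refines the
one obtained by individualizing `u`; hence `cl(u) ⊆ cl(v)`. For maximal `v` also `v ∈ cl(u)`,
so `cl(u) = cl(v)`, and the closures of two maximal vertices that meet at `x` both equal `cl(x)`.
-/

section RefinementOp

variable {V : Type*}

structure IsRefinementOp (f : (V → V → Prop) → V → V → Prop) : Prop where
  equivalence {r : V → V → Prop} : Equivalence r → Equivalence (f r)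
  le : ∀ r, f r ≤ r
  mono {r s : V → V → Prop} : Equivalence r → Equivalence s → r ≤ s → f r ≤ f s

lemma card_quot_lt_of_lt [Finite V] {r s : V → V → Prop} (hr : Equivalence r) (hrs : r < s) :
    Nat.card (Quot s) < Nat.card (Quot r) := by
  obtain ⟨x, y, hsxy, hrxy⟩ : ∃ x y, s x y ∧ ¬ r x y := by
    by_contra! h
    exact hrs.not_ge fun x y => h x y
  let φ : Quot r → Quot s := Quot.map id hrs.le
  have hφ : Function.Surjective φ := Quot.ind fun a => ⟨Quot.mk r a, rfl⟩
  by_contra! hle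
  have hφxy : φ (Quot.mk r x) = φ (Quot.mk r y) := Quot.sound hsxy
  have hxy := (hφ.bijective_of_nat_card_le hle).injective hφxy
  exact hrxy (hr.eqvGen_iff.mp (Quot.eqvGen_exact hxy))

namespace IsRefinementOp

variable {f g : (V → V → Prop) → V → V → Prop}

lemma comp (hf : IsRefinementOp f) (hg : IsRefinementOp g) : IsRefinementOp (g ∘ f) where
  equivalence hr := hg.equivalence (hf.equivalence hr)
  le r := (hg.le _).trans (hf.le r)
  mono hr hs hrs := hg.mono (hf.equivalence hr) (hf.equivalence hs) (hf.mono hr hs hrs)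

lemma iterate (hf : IsRefinementOp f) : ∀ n, IsRefinementOp f^[n]
  | 0 => ⟨id, fun _ => le_rfl, fun _ _ => id⟩
  | n + 1 => hf.comp (hf.iterate n)

lemma iterate_card_succ_isFixedPt [Fintype V] (hf : IsRefinementOp f) {r : V → V → Prop}
    (hr : Equivalence r) : f (f^[Fintype.card V + 1] r) = f^[Fintype.card V + 1] r := by
  by_contra hne
  have hmoves : ∀ k ≤ Fintype.card V, f (f^[k] r) ≠ f^[k] r := by
    intro k hk hfix
    apply hne
    have hstable : f^[Fintype.card V + 1] r = f^[k] r := by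
      rw [← Nat.sub_add_cancel (show k ≤ Fintype.card V + 1 by omega),
        Function.iterate_add_apply, Function.iterate_fixed hfix]
    rw [hstable, hfix]
  have hgrow : ∀ k ≤ Fintype.card V + 1, k ≤ Nat.card (Quot (f^[k] r)) := by
    intro k hk
    induction k with
    | zero => exact Nat.zero_le _
    | succ k ih =>
      rw [Function.iterate_succ_apply']
      have hequiv := hf.equivalence ((hf.iterate k).equivalence hr)
      have := card_quot_lt_of_lt hequiv (lt_of_le_of_ne (hf.le _) (hmoves k (by omega)))
      omega
  have hbound : Nat.card (Quot (f^[Fintype.card V + 1] r)) ≤ Fintype.card V :=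
    Nat.card_eq_fintype_card (α := V) ▸ Nat.card_le_card_of_surjective _ Quot.mk_surjective
  have := hgrow _ le_rfl
  omega

lemma iterate_card_succ_idem [Fintype V] (hf : IsRefinementOp f) {r : V → V → Prop}
    (hr : Equivalence r) :
    f^[Fintype.card V + 1] (f^[Fintype.card V + 1] r) = f^[Fintype.card V + 1] r :=
  Function.iterate_fixed (hf.iterate_card_succ_isFixedPt hr) _

end IsRefinementOp

end RefinementOp

section ColorRefinement

variable {V C : Type*}

lemma ncard_setOf_and_eq_of_le [Finite V] {r s : V → V → Prop} (hr : Equivalence r)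
    (hs : Equivalence s) (hrs : r ≤ s) {P Q : V → Prop}
    (h : ∀ z, {u | r u z ∧ P u}.ncard = {u | r u z ∧ Q u}.ncard) (z : V) :
    {u | s u z ∧ P u}.ncard = {u | s u z ∧ Q u}.ncard := by
  classical
  have := Fintype.ofFinite V
  let st : Setoid V := ⟨r, hr⟩
  have hsplit : ∀ R : V → Prop, {u | s u z ∧ R u}.ncard =
      ∑ k : Quotient st, if s k.out z then {u | r u k.out ∧ R u}.ncard else 0 := by
    intro R
    rw [Set.ncard_eq_toFinset_card', Set.toFinset_ofPred,
      Finset.card_eq_sum_card_fiberwise (f := Quotient.mk st) (t := Finset.univ)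
        fun _ _ => Finset.mem_univ _]
    refine Finset.sum_congr rfl fun k _ => ?_
    split_ifs with hk
    · rw [Set.ncard_eq_toFinset_card', Set.toFinset_ofPred]
      congr 1
      ext u
      simp only [Finset.mem_filter, Finset.mem_univ, true_and, Quotient.mk_eq_iff_out]
      exact ⟨fun ⟨⟨_, hR⟩, hu⟩ => ⟨hu, hR⟩, fun ⟨hu, hR⟩ => ⟨⟨hs.trans (hrs _ _ hu) hk, hR⟩, hu⟩⟩
    · rw [Finset.card_eq_zero, Finset.filter_eq_empty_iff]
      intro u hu hk'
      obtain ⟨-, hsu, -⟩ := Finset.mem_filter.mp hu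
      exact hk (hs.trans (hs.symm (hrs _ _ (Quotient.mk_eq_iff_out.mp hk'))) hsu)
  simp only [hsplit, h]

lemma crStep_le (G : SimpleGraph V) (χ : V → V → C) (r : V → V → Prop) : crStep G χ r ≤ r :=
  fun _ _ h => h.1

lemma crStep_equivalence (G : SimpleGraph V) (χ : V → V → C) {r : V → V → Prop}
    (hr : Equivalence r) : Equivalence (crStep G χ r) where
  refl _ := ⟨hr.refl _, fun _ _ _ => ⟨rfl, rfl⟩⟩
  symm := fun ⟨h, hc⟩ => ⟨hr.symm h, fun z c₁ c₂ => ⟨(hc z c₁ c₂).1.symm, (hc z c₁ c₂).2.symm⟩⟩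
  trans := fun ⟨h, hc⟩ ⟨h', hc'⟩ => ⟨hr.trans h h', fun z c₁ c₂ =>
    ⟨(hc z c₁ c₂).1.trans (hc' z c₁ c₂).1, (hc z c₁ c₂).2.trans (hc' z c₁ c₂).2⟩⟩

lemma crStep_mono [Finite V] (G : SimpleGraph V) (χ : V → V → C) {r s : V → V → Prop}
    (hr : Equivalence r) (hs : Equivalence s) (hrs : r ≤ s) : crStep G χ r ≤ crStep G χ s := by
  rintro x y ⟨hxy, hcount⟩
  refine ⟨hrs _ _ hxy, fun z c₁ c₂ => ?_⟩
  have hcomm : ∀ (q : V → V → Prop) (z : V) (A B : V → Prop),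
      {u | A u ∧ q u z ∧ B u} = {u | q u z ∧ A u ∧ B u} :=
    fun _ _ _ _ => Set.ext fun _ => and_left_comm
  have hlift : ∀ A A' B B' : V → Prop,
      (∀ z', {u | A u ∧ r u z' ∧ B u}.ncard = {u | A' u ∧ r u z' ∧ B' u}.ncard) →
      {u | A u ∧ s u z ∧ B u}.ncard = {u | A' u ∧ s u z ∧ B' u}.ncard := by
    intro A A' B B' h
    rw [hcomm, hcomm]
    exact ncard_setOf_and_eq_of_le hr hs hrs (fun z' => by rw [← hcomm, ← hcomm]; exact h z') z
  exact ⟨hlift _ _ _ _ fun z' => (hcount z' c₁ c₂).1, hlift _ _ _ _ fun z' => (hcount z' c₁ c₂).2⟩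

lemma isRefinementOp_crStep [Finite V] (G : SimpleGraph V) (χ : V → V → C) :
    IsRefinementOp (crStep G χ) :=
  ⟨crStep_equivalence G χ, crStep_le G χ, crStep_mono G χ⟩

end ColorRefinement

section SplitSmall

variable {V : Type*}

lemma Equivalence.setOf_rel_eq {r : V → V → Prop} (hr : Equivalence r) {x y : V} (h : r x y) :
    {u | r u x} = {u | r u y} :=
  Set.ext fun _ => ⟨(hr.trans · h), (hr.trans · (hr.symm h))⟩

lemma splitSmall_equivalence (t : ℕ) {r : V → V → Prop} (hr : Equivalence r) :
    Equivalence (splitSmall t r) where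
  refl _ := ⟨hr.refl _, fun _ => rfl⟩
  symm := fun ⟨h, hsmall⟩ => ⟨hr.symm h, fun hy => (hsmall (hr.setOf_rel_eq h ▸ hy)).symm⟩
  trans := fun ⟨h, hsmall⟩ ⟨h', hsmall'⟩ => ⟨hr.trans h h', fun hx =>
    (hsmall hx).trans (hsmall' ((hsmall hx) ▸ hx))⟩

lemma isRefinementOp_splitSmall [Finite V] (t : ℕ) : IsRefinementOp (splitSmall (V := V) t) where
  equivalence := splitSmall_equivalence t
  le _ _ _ h := h.1
  mono _ _ hrs _ _ := fun ⟨h, hsmall⟩ => ⟨hrs _ _ h, fun hx =>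
    hsmall ((Set.ncard_le_ncard (fun u hu => hrs _ _ hu)).trans hx)⟩

end SplitSmall

section Individualization

variable {V C : Type*}

lemma indivRel_equivalence (χ : V → V → C) (X : Set V) : Equivalence (indivRel χ X) where
  refl _ := ⟨rfl, Iff.rfl, fun _ => rfl⟩
  symm := fun ⟨hχ, hX, heq⟩ => ⟨hχ.symm, hX.symm, fun hy => (heq (hX.mpr hy)).symm⟩
  trans := fun ⟨hχ, hX, heq⟩ ⟨hχ', hX', heq'⟩ =>
    ⟨hχ.trans hχ', hX.trans hX', fun hx => (heq hx).trans (heq' (hX.mp hx))⟩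

lemma le_indivRel_singleton {χ : V → V → C} {r : V → V → Prop} (hr : Equivalence r)
    (hχ : ∀ x y, r x y → χ x x = χ y y) {u : V} (hu : ∀ y, r y u → y = u) :
    r ≤ indivRel χ {u} := by
  intro x y hxy
  simp only [indivRel, Set.mem_singleton_iff]
  refine ⟨hχ x y hxy, ⟨fun hx => ?_, fun hy => hu x (hy ▸ hxy)⟩, fun hx => ?_⟩
  · exact hx ▸ hu y (hr.symm (hx ▸ hxy))
  · exact (hx ▸ hu y (hr.symm (hx ▸ hxy))).symm

end Individualization

section Closure

variable {V C : Type*} [Fintype V] (G : SimpleGraph V) (χ : V → V → C) (t : ℕ)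

lemma isRefinementOp_tCRStep :
    IsRefinementOp (fun s => splitSmall (V := V) t (crStable G χ s)) :=
  ((isRefinementOp_crStep G χ).iterate _).comp (isRefinementOp_splitSmall t)

lemma isRefinementOp_tCRStable : IsRefinementOp (tCRStable G χ t) :=
  (isRefinementOp_tCRStep G χ t).iterate _

lemma tCRStable_idem {r : V → V → Prop} (hr : Equivalence r) :
    tCRStable G χ t (tCRStable G χ t r) = tCRStable G χ t r :=
  (isRefinementOp_tCRStep G χ t).iterate_card_succ_idem hr

variable {G χ t}

lemma mem_clSet_iff {X : Set V} {v : V} :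
    v ∈ clSet G χ t X ↔ ∀ u, tCRStable G χ t (indivRel χ X) u v → u = v := by
  have hrefl := ((isRefinementOp_tCRStable G χ t).equivalence (indivRel_equivalence χ X)).refl v
  refine ⟨fun hv u hu => ?_, fun h => Set.ncard_eq_one.mpr
    ⟨v, Set.eq_singleton_iff_unique_mem.mpr ⟨hrefl, h⟩⟩⟩
  obtain ⟨a, ha⟩ := Set.ncard_eq_one.mp hv
  have hva : v = a := (Set.ext_iff.mp ha v).mp hrefl
  have hua : u = a := (Set.ext_iff.mp ha u).mp hu
  rw [hva, hua]

lemma mem_clSet_self (v : V) : v ∈ clSet G χ t {v} :=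
  mem_clSet_iff.mpr fun _ hu => ((isRefinementOp_tCRStable G χ t).le _ _ _ hu).2.1.mpr rfl

lemma clSet_subset_of_mem {u v : V} (hu : u ∈ clSet G χ t {v}) :
    clSet G χ t {u} ⊆ clSet G χ t {v} := by
  have hop := isRefinementOp_tCRStable G χ t
  have hv := hop.equivalence (indivRel_equivalence χ {v})
  have hle : tCRStable G χ t (indivRel χ {v}) ≤ tCRStable G χ t (indivRel χ {u}) := by
    rw [← tCRStable_idem G χ t (indivRel_equivalence χ {v})]
    refine hop.mono hv (indivRel_equivalence χ {u}) (le_indivRel_singleton hv ?_ ?_)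
    · exact fun x y hxy => (hop.le _ x y hxy).1
    · exact mem_clSet_iff.mp hu
  intro x hx
  exact mem_clSet_iff.mpr fun y hy => mem_clSet_iff.mp hx y (hle y x hy)

lemma MaximalVtx.clSet_eq_of_mem {u v : V} (hv : MaximalVtx G χ t v)
    (hu : u ∈ clSet G χ t {v}) : clSet G χ t {u} = clSet G χ t {v} := by
  refine (clSet_subset_of_mem hu).antisymm (clSet_subset_of_mem ?_)
  by_cases huv : v = u
  · exact huv ▸ mem_clSet_self v
  · exact (hv u ⟨huv, hu⟩).2

end Closure

/-- Let `G` be a finite simple graph with a pair-coloring `χ` and `t ∈ ℕ`.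
If `v` and `w` are maximal vertices of the `t`-closure graph of `(G,χ)`, then either
`cl_t^{(G,χ)}(v) = cl_t^{(G,χ)}(w)` or `cl_t^{(G,χ)}(v) ∩ cl_t^{(G,χ)}(w) = ∅`. -/
theorem stmt_3 {V C : Type*} [Fintype V] (G : SimpleGraph V) (χ : V → V → C) (t : ℕ)
    (v w : V) (hv : MaximalVtx G χ t v) (hw : MaximalVtx G χ t w) :
    clSet G χ t {v} = clSet G χ t {w} ∨ clSet G χ t {v} ∩ clSet G χ t {w} = ∅ := by
  rcases (clSet G χ t {v} ∩ clSet G χ t {w}).eq_empty_or_nonempty with h | ⟨x, hxv, hxw⟩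
  · exact Or.inr h
  · exact Or.inl ((hv.clSet_eq_of_mem hxv).symm.trans (hw.clSet_eq_of_mem hxw))
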